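/- Let φ̌ be a Schwartz function, let a > 0, and for an integer p₀ define φ_{p₀}-convolution by (g * φ̌_{p₀})(x) := ∫_ℝ g(x - a y) φ̌(y) e^{i p₀ y} dy. Then for any g ∈ L^∞(ℝ), any x ∈ ℝ and any m ∈ ℕ, Σ_{p₀=2^m}^{2^{m+1}} |(g * φ̌_{p₀})(x)|² ≲ ‖g‖_∞², with implied constant depending only on φ̌. -/

import Mathlib

/-!
Substituting `y = 2πu` gives `modProj φ a p g x = 2π · 𝓕 H (-p)` with
`H u = g (x - 2πa u) φ (2πu)`. The values of `𝓕 H` at the integers are the Fourier coefficients of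
the `1`-periodic function `∑ₖ H (· + k)`, so by Bessel's inequality the sum of their squares is at
most its squared sup norm. As `(1 + t²) |H t| ≤ ‖g‖_∞ d` with `d` depending only on `φ`, that sup
norm is at most `4 d ‖g‖_∞ ∑ₖ (1 + k²)⁻¹`, uniformly in `a`, `x` and the range of `p`.
-/

open MeasureTheory Real Complex

/-- The modulated projection `(g * φ̌_{p₀})(x) = ∫ g(x - a y) φ̌(y) e^{i p₀ y} dy`. -/
noncomputable def modProj (φc : ℝ → ℂ) (a : ℝ) (p₀ : ℕ) (g : ℝ → ℂ) (x : ℝ) : ℂ :=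
  ∫ y : ℝ, g (x - a * y) * φc y * Complex.exp (Complex.I * (p₀ : ℝ) * y)

open scoped FourierTransform SchwartzMap

theorem SchwartzMap.exists_one_add_sq_mul_norm_le {F : Type*} [NormedAddCommGroup F]
    [NormedSpace ℝ F] (f : 𝓢(ℝ, F)) : ∃ d : ℝ, ∀ t : ℝ, (1 + t ^ 2) * ‖f t‖ ≤ d := by
  refine ⟨SchwartzMap.seminorm ℝ 0 0 f + SchwartzMap.seminorm ℝ 2 0 f, fun t => ?_⟩
  have h₀ := f.norm_pow_mul_le_seminorm ℝ 0 t
  have h₂ := f.norm_pow_mul_le_seminorm ℝ 2 t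
  rw [pow_zero, one_mul] at h₀
  rw [Real.norm_eq_abs, sq_abs] at h₂
  linarith

theorem one_add_sq_le_two_mul_one_add_sq_mul_one_add_sq (u k : ℝ) :
    1 + k ^ 2 ≤ 2 * (1 + u ^ 2) * (1 + (u + k) ^ 2) := by
  nlinarith [sq_nonneg (u + 2 * k), sq_nonneg (u * (u + k))]

theorem summable_inv_one_add_sq_int : Summable fun k : ℤ => (1 + (k : ℝ) ^ 2)⁻¹ := by
  refine (summable_one_div_int_pow.mpr one_lt_two).of_norm_bounded_eventually ?_
  filter_upwards [Filter.eventually_cofinite_ne 0] with k hk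
  rw [Real.norm_of_nonneg (by positivity), one_div]
  have : (0 : ℝ) < (k : ℝ) ^ 2 := by positivity
  gcongr
  linarith

theorem one_add_sq_mul_norm_mul_comp_mul_le {g φ : ℝ → ℂ} {B d c : ℝ}
    (hg : ∀ t, ‖g t‖ ≤ B) (hφ : ∀ t, (1 + t ^ 2) * ‖φ t‖ ≤ d) (hc : 1 ≤ |c|) (t : ℝ) :
    (1 + t ^ 2) * ‖g t * φ (c * t)‖ ≤ B * d := by
  have hB : 0 ≤ B := (norm_nonneg _).trans (hg 0)
  have hct : 1 + t ^ 2 ≤ 1 + (c * t) ^ 2 := by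
    rw [mul_pow, ← sq_abs c]
    gcongr
    exact le_mul_of_one_le_left (sq_nonneg t) (one_le_pow₀ hc)
  calc (1 + t ^ 2) * ‖g t * φ (c * t)‖ = ‖g t‖ * ((1 + t ^ 2) * ‖φ (c * t)‖) := by
        rw [norm_mul]; ring
    _ ≤ B * ((1 + (c * t) ^ 2) * ‖φ (c * t)‖) := by gcongr; exact hg t
    _ ≤ B * d := by gcongr; exact hφ _

section Decay

variable {E : Type*} [NormedAddCommGroup E] {f : ℝ → E} {d : ℝ}

theorem norm_comp_add_le_of_one_add_sq_mul_norm_le (hf : ∀ t, (1 + t ^ 2) * ‖f t‖ ≤ d)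
    (u k : ℝ) : ‖f (u + k)‖ ≤ 2 * (1 + u ^ 2) * d * (1 + k ^ 2)⁻¹ := by
  have hd : (1 + (u + k) ^ 2) * ‖f (u + k)‖ ≤ d := hf (u + k)
  rw [le_mul_inv_iff₀ (by positivity)]
  calc ‖f (u + k)‖ * (1 + k ^ 2)
      ≤ ‖f (u + k)‖ * (2 * (1 + u ^ 2) * (1 + (u + k) ^ 2)) := by
        gcongr; exact one_add_sq_le_two_mul_one_add_sq_mul_one_add_sq u k
    _ = 2 * (1 + u ^ 2) * ((1 + (u + k) ^ 2) * ‖f (u + k)‖) := by ring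
    _ ≤ 2 * (1 + u ^ 2) * d := by gcongr

theorem summable_norm_comp_add_int_of_one_add_sq_mul_norm_le
    (hf : ∀ t, (1 + t ^ 2) * ‖f t‖ ≤ d) (u : ℝ) : Summable fun k : ℤ => ‖f (u + k)‖ :=
  (summable_inv_one_add_sq_int.mul_left (2 * (1 + u ^ 2) * d)).of_nonneg_of_le
    (fun _ => norm_nonneg _) (fun k => norm_comp_add_le_of_one_add_sq_mul_norm_le hf u k)

theorem norm_tsum_comp_add_int_le_of_one_add_sq_mul_norm_le
    (hf : ∀ t, (1 + t ^ 2) * ‖f t‖ ≤ d) {u : ℝ} (hu : |u| ≤ 1) :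
    ‖∑' k : ℤ, f (u + k)‖ ≤ 4 * d * ∑' k : ℤ, (1 + (k : ℝ) ^ 2)⁻¹ := by
  have hd : 0 ≤ d := le_trans (by positivity) (hf 0)
  have hu2 : 2 * (1 + u ^ 2) ≤ 4 := by nlinarith [sq_abs u, abs_nonneg u]
  have hs := summable_norm_comp_add_int_of_one_add_sq_mul_norm_le hf u
  rw [← tsum_mul_left]
  refine (norm_tsum_le_tsum_norm hs).trans
    (hs.tsum_le_tsum (fun k => ?_) (summable_inv_one_add_sq_int.mul_left _))
  exact (norm_comp_add_le_of_one_add_sq_mul_norm_le hf u k).trans (by gcongr)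

theorem integrable_of_one_add_sq_mul_norm_le (hm : AEStronglyMeasurable f)
    (hf : ∀ t, (1 + t ^ 2) * ‖f t‖ ≤ d) : Integrable f := by
  refine (integrable_inv_one_add_sq.const_mul d).mono' hm (ae_of_all _ fun t => ?_)
  rw [← div_eq_mul_inv, le_div_iff₀ (by positivity), mul_comm]
  exact hf t

end Decay

theorem stronglyMeasurable_tsum {α ι E : Type*} [MeasurableSpace α] [Countable ι]
    [TopologicalSpace E] [AddCommMonoid E] [ContinuousAdd E]
    [TopologicalSpace.PseudoMetrizableSpace E] {F : ι → α → E}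
    (hF : ∀ i, StronglyMeasurable (F i)) (hs : ∀ a, Summable fun i => F i a) :
    StronglyMeasurable fun a => ∑' i, F i a := by
  refine stronglyMeasurable_of_tendsto Filter.atTop
    (fun s => Finset.stronglyMeasurable_sum s fun i _ => hF i) ?_
  rw [tendsto_pi_nhds]
  intro a
  simp only [Finset.sum_apply]
  exact (hs a).hasSum

theorem sum_sq_norm_fourierCoeffOn_le {a b : ℝ} (hab : a < b) {f : ℝ → ℂ} {M : ℝ}
    (hm : AEStronglyMeasurable f (volume.restrict (Set.Ioc a b)))
    (hM : ∀ x ∈ Set.Ioc a b, ‖f x‖ ≤ M) (s : Finset ℤ) :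
    ∑ n ∈ s, ‖fourierCoeffOn hab f n‖ ^ 2 ≤ M ^ 2 := by
  have hL2 : MemLp f 2 (volume.restrict (Set.Ioc a b)) :=
    .of_bound hm M ((ae_restrict_iff' measurableSet_Ioc).mpr (ae_of_all _ hM))
  refine (sum_le_hasSum s (fun _ _ => sq_nonneg _) (hasSum_sq_fourierCoeffOn hab hL2)).trans ?_
  have hsq : ∀ x ∈ Set.uIoc a b, ‖‖f x‖ ^ 2‖ ≤ M ^ 2 := fun x hx => by
    rw [Set.uIoc_of_le hab.le] at hx
    rw [norm_pow, norm_norm]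
    exact pow_le_pow_left₀ (norm_nonneg _) (hM x hx) 2
  have hint := intervalIntegral.norm_integral_le_of_norm_le_const hsq
  rw [abs_of_pos (sub_pos.mpr hab)] at hint
  rw [smul_eq_mul, inv_mul_le_iff₀ (sub_pos.mpr hab)]
  linarith [(Real.le_norm_self _).trans hint]

theorem fourierCoeffOn_tsum_comp_add_int {f : ℝ → ℂ} (hf : Integrable f) (m : ℤ) :
    fourierCoeffOn zero_lt_one (fun x => ∑' n : ℤ, f (x + n)) m = 𝓕 f m := by
  set e : ℝ → ℂ := fun x => fourier (-m) (x : AddCircle ((1 : ℝ) - 0))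
  have norm_e : ∀ x, ‖e x‖ = 1 := fun x => by simp only [e, fourier_apply, Circle.norm_coe]
  have e_add_int : ∀ (n : ℤ) x, e (x + n) = e x := fun n x => by
    have : ((x + n : ℝ) : AddCircle ((1 : ℝ) - 0)) = x := by rw [sub_zero]; simp
    simp only [e, this]
  have hef : Integrable fun x => e x * f x :=
    hf.bdd_mul ((fourier (-m)).continuous.comp (AddCircle.continuous_mk' _)).aestronglyMeasurable
      (ae_of_all _ fun x => (norm_e x).le)
  calc fourierCoeffOn zero_lt_one (fun x => ∑' n : ℤ, f (x + n)) m
      = ∫ x in (0 : ℝ)..1, ∑' n : ℤ, e (x + n) * f (x + n) := by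
        simp_rw [fourierCoeffOn_eq_integral, e_add_int, tsum_mul_left]
        simp [e]
    _ = ∑' n : ℤ, ∫ x in (0 : ℝ)..1, e (x + n) * f (x + n) := by
        simp_rw [intervalIntegral.integral_of_le zero_le_one]
        refine (integral_tsum_of_summable_integral_norm
          (F := fun (n : ℤ) x => e (x + n) * f (x + n))
          (fun n => (hef.comp_add_right (n : ℝ)).restrict) ?_).symm
        refine hf.norm.hasSum_intervalIntegral_comp_add_int.summable.congr fun n => ?_
        simp [intervalIntegral.integral_of_le zero_le_one, norm_e]
    _ = ∫ x, e x * f x := hef.hasSum_intervalIntegral_comp_add_int.tsum_eq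
    _ = 𝓕 f m := by
      rw [fourier_real_eq_integral_exp_smul]
      congr 1 with x
      simp only [e, smul_eq_mul, fourier_coe_apply]
      congr 2
      push_cast
      ring

theorem sum_sq_norm_fourier_intCast_le {f : ℝ → ℂ} {d : ℝ} (hm : StronglyMeasurable f)
    (hf : ∀ t, (1 + t ^ 2) * ‖f t‖ ≤ d) (s : Finset ℤ) :
    ∑ n ∈ s, ‖𝓕 f n‖ ^ 2 ≤ (4 * d * ∑' k : ℤ, (1 + (k : ℝ) ^ 2)⁻¹) ^ 2 := by
  have hP : StronglyMeasurable fun u => ∑' k : ℤ, f (u + k) :=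
    stronglyMeasurable_tsum (fun k => hm.comp_measurable (measurable_add_const _))
      fun u => (summable_norm_comp_add_int_of_one_add_sq_mul_norm_le hf u).of_norm
  simp_rw [← fourierCoeffOn_tsum_comp_add_int
    (integrable_of_one_add_sq_mul_norm_le hm.aestronglyMeasurable hf)]
  exact sum_sq_norm_fourierCoeffOn_le zero_lt_one hP.aestronglyMeasurable
    (fun u hu => norm_tsum_comp_add_int_le_of_one_add_sq_mul_norm_le hf
      (abs_le.mpr ⟨by linarith [hu.1], hu.2⟩)) s

theorem modProj_eq_two_pi_mul_fourier (φ : ℝ → ℂ) (a : ℝ) (p : ℕ) (g : ℝ → ℂ) (x : ℝ) :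
    modProj φ a p g x = 2 * π * 𝓕 (fun u => g (x - a * (2 * π * u)) * φ (2 * π * u)) (-p) := by
  set G : ℝ → ℂ := fun y => g (x - a * y) * φ y * Complex.exp (Complex.I * (p : ℝ) * y)
  have hG : ∀ u : ℝ, Complex.exp (↑(-2 * π * u * -(p : ℝ)) * Complex.I) •
      (g (x - a * (2 * π * u)) * φ (2 * π * u)) = G (2 * π * u) := fun u => by
    simp only [G, smul_eq_mul]
    push_cast
    ring_nf
  rw [fourier_real_eq_integral_exp_smul]
  simp_rw [hG]
  rw [Measure.integral_comp_mul_left, abs_of_pos (by positivity), Complex.real_smul,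
    ← mul_assoc]
  push_cast
  rw [mul_inv_cancel₀ (by simp [Real.pi_ne_zero]), one_mul]
  rfl

/-- Pointwise Bessel inequality against an `L^∞` function:
`Σ_{p₀=2^m}^{2^{m+1}} |(g * φ̌_{p₀})(x)|² ≲ ‖g‖_∞²` with constant depending only
on the Schwartz function `φ̌`. -/
theorem bessel_modulated_projections_Linfty (φc : SchwartzMap ℝ ℂ) :
    ∃ C : ℝ, 0 < C ∧
      ∀ (a : ℝ), 0 < a → ∀ (g : ℝ → ℂ) (B : ℝ), Measurable g → (∀ y, ‖g y‖ ≤ B) →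
        ∀ (x : ℝ) (m : ℕ),
          ∑ p₀ ∈ Finset.Icc (2 ^ m) (2 ^ (m + 1)),
              ‖modProj (φc : ℝ → ℂ) a p₀ g x‖ ^ 2 ≤ C * B ^ 2 := by
  obtain ⟨d, hd⟩ := φc.exists_one_add_sq_mul_norm_le
  set S := ∑' k : ℤ, (1 + (k : ℝ) ^ 2)⁻¹
  refine ⟨(2 * π * (4 * d * S)) ^ 2 + 1, by positivity, fun a _ g B hg hB x m => ?_⟩
  set H : ℝ → ℂ := fun u => g (x - a * (2 * π * u)) * φc (2 * π * u)
  have hH_meas : StronglyMeasurable H :=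
    ((hg.comp (by fun_prop)).mul (φc.continuous.measurable.comp (by fun_prop))).stronglyMeasurable
  have hH_decay : ∀ t, (1 + t ^ 2) * ‖H t‖ ≤ B * d :=
    one_add_sq_mul_norm_mul_comp_mul_le (fun _ => hB _) hd
      (by rw [abs_of_pos two_pi_pos]; linarith [pi_gt_three])
  calc ∑ p ∈ Finset.Icc (2 ^ m) (2 ^ (m + 1)), ‖modProj φc a p g x‖ ^ 2
      = (2 * π) ^ 2 * ∑ n ∈ (Finset.Icc (2 ^ m) (2 ^ (m + 1))).image (fun p : ℕ => -(p : ℤ)),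
          ‖𝓕 H n‖ ^ 2 := by
        rw [Finset.sum_image fun p _ q _ h => by simpa using h, Finset.mul_sum]
        simp [modProj_eq_two_pi_mul_fourier, mul_pow, abs_of_pos pi_pos, H]
    _ ≤ (2 * π) ^ 2 * (4 * (B * d) * S) ^ 2 := by
        gcongr
        exact sum_sq_norm_fourier_intCast_le hH_meas hH_decay _
    _ ≤ ((2 * π * (4 * d * S)) ^ 2 + 1) * B ^ 2 := by nlinarith [sq_nonneg B]
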